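/- For every ordinal α < ε₀, every a ∈ ℕ and every strictly increasing function f : ℕ → ℕ, there exists b ≥ a such that the set {f(a), f(a+1), ..., f(b)} is α-large. -/

import Mathlib

open ONote

/-- Append a term `ω^e·k` (allowing `k = 0`, in which case nothing is added)
in front of the notation `t`. -/
def appTerm (e : ONote) (k : ℕ) (t : ONote) : ONote :=
  if h : k = 0 then t else ONote.oadd e ⟨k, Nat.pos_of_ne_zero h⟩ t

/-- If the ordinal denoted by `e` is a successor `γ + 1`, return `some γ`;
otherwise (zero or limit) return `none`. -/
def spred : ONote → Option ONote
  | ONote.zero => none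
  | ONote.oadd e k a =>
    match a with
    | ONote.oadd e' k' a' => (spred (ONote.oadd e' k' a')).map (ONote.oadd e k)
    | ONote.zero =>
      if e = ONote.zero then some (appTerm ONote.zero ((k : ℕ) - 1) ONote.zero)
      else none

/-- The canonical fundamental sequences for ordinals below `ε₀`:
`0[n] = 0`, `(β + ω^0)[n] = β`, `(β + ω^{γ+1})[n] = β + ω^γ·n`, and
`(β + ω^λ)[n] = β + ω^{λ[n]}` for `λ` a limit. -/
def fund : ONote → ℕ → ONote
  | ONote.zero, _ => ONote.zero
  | ONote.oadd e k (ONote.oadd e' k' a'), n =>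
      ONote.oadd e k (fund (ONote.oadd e' k' a') n)
  | ONote.oadd e k ONote.zero, n =>
      if e = ONote.zero then appTerm ONote.zero ((k : ℕ) - 1) ONote.zero
      else
        match spred e with
        | some γ => appTerm e ((k : ℕ) - 1) (appTerm γ n ONote.zero)
        | none => appTerm e ((k : ℕ) - 1) (ONote.oadd (fund e n) 1 ONote.zero)

/-- The finite set listed (in increasing order) by `A` is `α`-large:
`α[a₀][a₁]…[a_b] = 0`. -/
def IsLarge (α : ONote) (A : List ℕ) : Prop :=
  A.foldl fund α = ONote.zero

/-!
For a nonzero notation `α` in normal form, `α[n]` is again in normal form and denotes a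
strictly smaller ordinal. Along any sequence `g` the iterates `α[g 0][g 1]…` therefore form a
strictly decreasing sequence of ordinals until they reach `0`, which must happen after finitely
many steps.
-/

open Ordinal

theorem repr_appTerm (e : ONote) (k : ℕ) (t : ONote) :
    (appTerm e k t).repr = ω ^ e.repr * k + t.repr := by
  unfold appTerm
  split
  · simp [*]
  · simp [ONote.repr]

theorem nfBelow_appTerm {e t : ONote} {b : Ordinal} (k : ℕ) (he : NF e) (hlt : e.repr < b)
    (ht : NFBelow t e.repr) : NFBelow (appTerm e k t) b := by
  unfold appTerm
  split
  · exact ht.mono hlt.le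
  · exact NFBelow.oadd he ht hlt

theorem nf_appTerm {e t : ONote} (k : ℕ) (he : NF e) (ht : NFBelow t e.repr) :
    NF (appTerm e k t) :=
  ⟨⟨_, nfBelow_appTerm k he (lt_add_one _) ht⟩⟩

theorem natCast_pnat_sub_one_add_one {R : Type*} [AddMonoidWithOne R] (k : ℕ+) :
    (((k : ℕ) - 1 : ℕ) : R) + 1 = (k : ℕ) := by
  rw [← Nat.cast_add_one, Nat.sub_add_cancel k.pos]

theorem nf_and_repr_add_one_of_spred_eq_some :
    ∀ {e γ : ONote}, NF e → spred e = some γ → NF γ ∧ γ.repr + 1 = e.repr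
  | .zero, _, _, h => by simp [spred] at h
  | .oadd e k (.oadd e' k' a'), _, he, h => by
    rw [spred] at h
    obtain ⟨γ', hγ', rfl⟩ := Option.map_eq_some_iff.1 h
    obtain ⟨hnf, hrepr⟩ := nf_and_repr_add_one_of_spred_eq_some he.snd hγ'
    have hlt : γ'.repr < ω ^ e.repr := ((lt_add_one _).trans_eq hrepr).trans he.snd'.repr_lt
    refine ⟨he.fst.oadd k (NF.below_of_lt' hlt hnf), ?_⟩
    simp only [ONote.repr, add_assoc, hrepr]
  | .oadd e k .zero, _, _, h => by
    rw [spred] at h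
    split_ifs at h with he0
    subst he0
    cases h
    refine ⟨nf_appTerm _ NF.zero NFBelow.zero, ?_⟩
    simpa [repr_appTerm, ONote.repr] using natCast_pnat_sub_one_add_one (R := Ordinal) k

theorem fund_oadd_oadd (e : ONote) (k : ℕ+) (e' : ONote) (k' : ℕ+) (a' : ONote) (n : ℕ) :
    fund (oadd e k (oadd e' k' a')) n = oadd e k (fund (oadd e' k' a') n) := by
  rw [fund]

theorem fund_oadd_zero (e : ONote) (k : ℕ+) (n : ℕ) :
    fund (oadd e k ONote.zero) n = appTerm e ((k : ℕ) - 1) (fund (oadd e 1 ONote.zero) n) := by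
  rw [fund, fund]
  split_ifs with he0
  · subst he0; rfl
  · cases spred e <;> rfl

theorem nfBelow_fund_omega_opow {e : ONote} (n : ℕ) (he : NF e) (hfund : NF (fund e n))
    (hlt : e ≠ ONote.zero → (fund e n).repr < e.repr) :
    NFBelow (fund (oadd e 1 ONote.zero) n) e.repr := by
  rw [fund]
  split_ifs with he0
  · subst he0; exact NFBelow.zero
  · cases hγ : spred e with
    | some γ =>
      obtain ⟨hγnf, hrepr⟩ := nf_and_repr_add_one_of_spred_eq_some he hγ
      exact nfBelow_appTerm n hγnf (hrepr ▸ lt_add_one _) NFBelow.zero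
    | none => exact NFBelow.oadd hfund NFBelow.zero (hlt he0)

theorem ONote.NF.fund_and_repr_fund_lt (n : ℕ) :
    ∀ {α : ONote}, NF α → NF (fund α n) ∧ (α ≠ ONote.zero → (fund α n).repr < α.repr)
  | .zero, _ => ⟨NF.zero, fun h => absurd rfl h⟩
  | .oadd e k (.oadd e' k' a'), h => by
    obtain ⟨hnf, hlt⟩ := NF.fund_and_repr_fund_lt n h.snd
    have hlt := hlt nofun
    rw [fund_oadd_oadd]
    refine ⟨h.fst.oadd k (NF.below_of_lt' (hlt.trans h.snd'.repr_lt) hnf), fun _ => ?_⟩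
    simpa only [ONote.repr] using (add_lt_add_iff_left _).2 hlt
  | .oadd e k .zero, h => by
    obtain ⟨hnf, hlt⟩ := NF.fund_and_repr_fund_lt n h.fst
    have hT := nfBelow_fund_omega_opow n h.fst hnf hlt
    rw [fund_oadd_zero]
    refine ⟨nf_appTerm _ h.fst hT, fun _ => ?_⟩
    calc (appTerm e ((k : ℕ) - 1) (fund (ONote.oadd e 1 ONote.zero) n)).repr
        = ω ^ e.repr * ((k : ℕ) - 1 : ℕ) + (fund (ONote.oadd e 1 ONote.zero) n).repr :=
          repr_appTerm ..
      _ < ω ^ e.repr * ((k : ℕ) - 1 : ℕ) + ω ^ e.repr := (add_lt_add_iff_left _).2 hT.repr_lt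
      _ = (ONote.oadd e k ONote.zero).repr := by
        rw [← mul_add_one, natCast_pnat_sub_one_add_one]; simp [ONote.repr]

theorem isLarge_cons {α : ONote} {n : ℕ} {A : List ℕ} :
    IsLarge α (n :: A) ↔ IsLarge (fund α n) A :=
  Iff.rfl

theorem ONote.NF.exists_isLarge_range_map :
    ∀ (g : ℕ → ℕ) {α : ONote}, NF α → ∃ m, IsLarge α ((List.range (m + 1)).map g)
  | g, α, hα => by
    by_cases h0 : α = ONote.zero
    · exact ⟨0, by subst h0; rfl⟩
    obtain ⟨hnf, hlt⟩ := hα.fund_and_repr_fund_lt (g 0)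
    obtain ⟨m, hm⟩ := hnf.exists_isLarge_range_map (g ∘ Nat.succ)
    refine ⟨m + 1, ?_⟩
    rwa [List.range_succ_eq_map, List.map_cons, List.map_map, isLarge_cons]
termination_by _ α => α
decreasing_by exact lt_def.2 (hlt h0)

theorem exists_alpha_large_set_general (α : ONote) (hα : α.NF) (a : ℕ)
    (f : ℕ → ℕ) :
    ∃ b : ℕ, a ≤ b ∧
      IsLarge α (((List.range (b + 1 - a)).map (fun i => f (a + i)))) := by
  obtain ⟨m, hm⟩ := hα.exists_isLarge_range_map (fun i => f (a + i))
  refine ⟨a + m, by omega, ?_⟩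
  rwa [show a + m + 1 - a = m + 1 by omega]

theorem exists_alpha_large_set (α : ONote) (hα : α.NF) (a : ℕ)
    (f : ℕ → ℕ) (hf : StrictMono f) :
    ∃ b : ℕ, a ≤ b ∧
      IsLarge α (((List.range (b + 1 - a)).map (fun i => f (a + i)))) :=
  exists_alpha_large_set_general α hα a f
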